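/- Let m ≥ 1, let M, N ⊆ [m] with ∅ ≠ N ⊊ [m], and let D = aΔ_M + cΔ_N^c ⊆ E^m. Then the binary Gray image Φ(C^R_D) is an F₂-linear code of length n = 2^{|M|+1}(2^m−2^{|N|}), with 2^m codewords (F₂-dimension m), minimum distance d = 2^{|M|}(2^m−2^{|N|}), and every nonzero codeword has Hamming weight in {2^{m+|M|}, 2^{|M|}(2^m−2^{|N|−1}), 2^{|M|}(2^m−2^{|N|})}. Furthermore: (i) if |N| ≤ m−2, then Φ(C^R_D) is a minimal code; (ii) if |M|+|N| ≤ m−1 and 2^{|M|+1}−1 < |M|+|N|+1, then Φ(C^R_D) is distance optimal, i.e., there exists no F₂-linear code of length n and dimension m all of whose nonzero codewords have Hamming weight ≥ d+1; (iii) if m ≤ |M|+|N| ≤ 2m−1 and 0 < 2^{|M|+|N|+1−m}(2^{m−|N|}−1) < m, then Φ(C^R_D) is likewise distance optimal. -/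

import Mathlib

/-!
Writing `v = aα + cβ`, the Gray image of `c^R_D(v)` depends only on `α`, and at the coordinate
`(t₁, t₂)` it reads `(t₂·α, t₁·α + t₂·α)`. Summing over `D = Δ_M × Δ_Nᶜ`, its weight is
`2^{|M|} (2^m - 2R) + P (2R - 2^{|N|})`, where `P` and `R` count the `t` in `Δ_M` and `Δ_N` with
`t·α = 1`. Since `Δ_M` and `Δ_N` are subspaces, each of `P`, `R` is `0` or half of the subspace,
which leaves exactly three weights, the smallest one attained as soon as `α` meets `N`.
Minimality is the Ashikhmin–Barg criterion: if `w_max < 2 w_min`, a support inclusion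
`supp y ⊆ supp x` with `y ≠ x` would give `wt x = wt y + wt (x + y) ≥ 2 w_min`.
Distance optimality is the Griesmer bound `∑_{i<m} ⌈(d+1)/2^i⌉ ≤ n`, which fails for `d + 1`
under either arithmetic condition.
-/

open Finset

/-- The simplicial complex `Δ_M ⊆ 𝔽₂^m` generated by `M ⊆ [m]`:
all vectors whose support is contained in `M`. -/
def deltaC {m : ℕ} (M : Finset (Fin m)) : Finset (Fin m → ZMod 2) :=
  Finset.univ.filter (fun w => ∀ i, w i ≠ 0 → i ∈ M)

/-- Dot product over `𝔽₂`. -/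
def dotp {m : ℕ} (x y : Fin m → ZMod 2) : ZMod 2 := ∑ i, x i * y i

/-- The Gray map on a single element `a·s + c·t ↔ (s, t)` of `E = 𝔽₂ × 𝔽₂`:
`Φ(as + ct) = (t, s + t)`. -/
def grayPair (e : ZMod 2 × ZMod 2) : Fin 2 → ZMod 2 := ![e.2, e.1 + e.2]

/-- The left codeword `c^L_D(v)` for `v = aα + cβ ↔ (α, β)`:
its coordinate at `d = (t₁, t₂) ∈ D` is `a(α·t₁) + c(β·t₁) ↔ (α·t₁, β·t₁)`. -/
def cwL {m : ℕ} (Ds : Finset ((Fin m → ZMod 2) × (Fin m → ZMod 2)))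
    (v : (Fin m → ZMod 2) × (Fin m → ZMod 2)) :
    {d // d ∈ Ds} → ZMod 2 × ZMod 2 :=
  fun d => (dotp v.1 d.1.1, dotp v.2 d.1.1)

/-- The Gray image `Φ(c^L_D(v)) ∈ 𝔽₂^{2|D|}` of the left codeword `c^L_D(v)`;
its Hamming weight (`hammingNorm`) is the Lee weight of `c^L_D(v)`. -/
def gcwL {m : ℕ} (Ds : Finset ((Fin m → ZMod 2) × (Fin m → ZMod 2)))
    (v : (Fin m → ZMod 2) × (Fin m → ZMod 2)) :
    {d // d ∈ Ds} × Fin 2 → ZMod 2 :=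
  fun x => grayPair (cwL Ds v x.1) x.2

/-- The right codeword `c^R_D(v)` for `v = aα + cβ ↔ (α, β)`:
its coordinate at `d = (t₁, t₂) ∈ D` is `a(t₁·α) + c(t₂·α) ↔ (t₁·α, t₂·α)`. -/
def cwR {m : ℕ} (Ds : Finset ((Fin m → ZMod 2) × (Fin m → ZMod 2)))
    (v : (Fin m → ZMod 2) × (Fin m → ZMod 2)) :
    {d // d ∈ Ds} → ZMod 2 × ZMod 2 :=
  fun d => (dotp d.1.1 v.1, dotp d.1.2 v.1)

/-- The Gray image `Φ(c^R_D(v)) ∈ 𝔽₂^{2|D|}` of the right codeword `c^R_D(v)`;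
its Hamming weight (`hammingNorm`) is the Lee weight of `c^R_D(v)`. -/
def gcwR {m : ℕ} (Ds : Finset ((Fin m → ZMod 2) × (Fin m → ZMod 2)))
    (v : (Fin m → ZMod 2) × (Fin m → ZMod 2)) :
    {d // d ∈ Ds} × Fin 2 → ZMod 2 :=
  fun x => grayPair (cwR Ds v x.1) x.2

open Module

section BinaryWeight

variable {ι : Type*}

lemma add_self_eq_zero_zmod_two (x : ι → ZMod 2) : x + x = 0 :=
  funext fun i => CharTwo.add_self_eq_zero (x i)

lemma eq_of_add_eq_zero_zmod_two {x y : ι → ZMod 2} (h : x + y = 0) : x = y :=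
  add_right_cancel (h.trans (add_self_eq_zero_zmod_two y).symm)

variable [Fintype ι]

lemma hammingNorm_eq_sum_val (x : ι → ZMod 2) : hammingNorm x = ∑ i, (x i).val := by
  rw [hammingNorm, Finset.card_filter]
  exact Finset.sum_congr rfl fun i _ => by generalize x i = a; revert a; decide

lemma hammingNorm_add_hammingNorm_add (c x : ι → ZMod 2) :
    hammingNorm x + hammingNorm (x + c) = hammingNorm c + 2 * ∑ i ∈ {i | c i = 0}, (x i).val := by
  simp only [hammingNorm_eq_sum_val, Pi.add_apply, ← Finset.sum_add_distrib, Finset.sum_filter,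
    Finset.mul_sum]
  exact Finset.sum_congr rfl fun i _ => by
    generalize x i = a; generalize c i = b; revert a b; decide

lemma hammingNorm_add_of_support_subset {x y : ι → ZMod 2} (h : ∀ i, y i ≠ 0 → x i ≠ 0) :
    hammingNorm (x + y) + hammingNorm y = hammingNorm x := by
  have hsum : ∑ i ∈ {i | x i = 0}, (y i).val = 0 :=
    Finset.sum_eq_zero fun i hi => by
      by_contra hne
      exact h i (fun h0 => hne (by simp [h0])) (Finset.mem_filter.mp hi).2
  rw [add_comm (hammingNorm _), add_comm x, hammingNorm_add_hammingNorm_add, hsum, mul_zero,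
    add_zero]

lemma eq_of_support_subset_of_lt_two_mul {d W : ℕ} (hW : W < 2 * d) {x y : ι → ZMod 2}
    (hx : hammingNorm x ≤ W) (hy : d ≤ hammingNorm y)
    (hxy : x + y ≠ 0 → d ≤ hammingNorm (x + y)) (hsub : ∀ i, y i ≠ 0 → x i ≠ 0) : y = x := by
  by_contra hne
  have hxy0 : x + y ≠ 0 := fun h0 => hne (eq_of_add_eq_zero_zmod_two h0).symm
  have := hammingNorm_add_of_support_subset hsub
  have := hxy hxy0
  omega

end BinaryWeight

section Griesmer

variable {ι : Type*} [Fintype ι]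

/-- Restricting to the coordinates outside `supp c` kills only `0` and `c`, and the identity
`wt x + wt (x + c) = wt c + 2 wt (x restricted outside supp c)` bounds the residual weights below
by `wt c / 2`. -/
lemma exists_residual_code (C : Submodule (ZMod 2) (ι → ZMod 2)) {c : ι → ZMod 2} (hc : c ∈ C)
    (hc0 : c ≠ 0) (hmin : ∀ x ∈ C, x ≠ 0 → hammingNorm c ≤ hammingNorm x) :
    ∃ C' : Submodule (ZMod 2) ({i // c i = 0} → ZMod 2),
      finrank (ZMod 2) C' + 1 = finrank (ZMod 2) C ∧
      ∀ y ∈ C', y ≠ 0 → hammingNorm c ≤ 2 * hammingNorm y := by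
  let f : C →ₗ[ZMod 2] ({i // c i = 0} → ZMod 2) :=
    (LinearMap.funLeft (ZMod 2) (ZMod 2) Subtype.val).comp C.subtype
  have hfc : f ⟨c, hc⟩ = 0 := funext fun i => i.2
  have key (x : C) : hammingNorm (x : ι → ZMod 2) + hammingNorm ((x : ι → ZMod 2) + c)
      = hammingNorm c + 2 * hammingNorm (f x) := by
    rw [hammingNorm_add_hammingNorm_add, hammingNorm_eq_sum_val (f x),
      Finset.sum_subtype (p := fun i => c i = 0) _ (fun i => by simp)]
    rfl
  have hc_pos : 0 < hammingNorm c := hammingNorm_pos_iff.mpr hc0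
  have hker : LinearMap.ker f = (ZMod 2) ∙ ⟨c, hc⟩ := by
    refine le_antisymm (fun x hx => ?_) (Submodule.span_le.mpr (by simpa using hfc))
    rw [Submodule.mem_span_singleton]
    by_cases hx0 : x = 0
    · exact ⟨0, by simp [hx0]⟩
    by_cases hxc : (x : ι → ZMod 2) + c = 0
    · exact ⟨1, by ext1; simp [eq_of_add_eq_zero_zmod_two hxc]⟩
    have h1 := hmin _ x.2 (by simpa using hx0)
    have h2 := hmin _ (C.add_mem x.2 hc) hxc
    have := key x
    rw [LinearMap.mem_ker.mp hx, hammingNorm_zero] at this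
    omega
  refine ⟨LinearMap.range f, ?_, ?_⟩
  · rw [← LinearMap.finrank_range_add_finrank_ker f, hker,
      finrank_span_singleton (by simpa using hc0)]
  · rintro _ ⟨x, rfl⟩ hy
    have hx0 : (x : ι → ZMod 2) ≠ 0 := fun h => hy (by simp [f, h])
    have hxc : (x : ι → ZMod 2) + c ≠ 0 := fun h => hy <| by
      rw [show x = ⟨c, hc⟩ from Subtype.ext (eq_of_add_eq_zero_zmod_two h), hfc]
    have h1 := hmin _ x.2 hx0
    have h2 := hmin _ (C.add_mem x.2 hc) hxc
    have := key x
    omega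

lemma le_mul_ceilDiv (a : ℕ) {b : ℕ} (hb : 0 < b) : a ≤ b * (a ⌈/⌉ b) :=
  (ceilDiv_le_iff_le_mul hb).1 le_rfl

lemma ceilDiv_two_ceilDiv_two_pow (D i : ℕ) : D ⌈/⌉ 2 ⌈/⌉ 2 ^ i = D ⌈/⌉ 2 ^ (i + 1) := by
  refine le_antisymm ?_ ?_ <;> rw [ceilDiv_le_iff_le_mul (by positivity)]
  · rw [ceilDiv_le_iff_le_mul two_pos, ← mul_assoc, ← pow_succ']
    exact le_mul_ceilDiv D (by positivity)
  · rw [pow_succ', mul_assoc]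
    exact (le_mul_ceilDiv D two_pos).trans
      (Nat.mul_le_mul_left 2 (le_mul_ceilDiv _ (by positivity)))

theorem griesmer_bound (C : Submodule (ZMod 2) (ι → ZMod 2)) {D : ℕ}
    (hD : ∀ x ∈ C, x ≠ 0 → D ≤ hammingNorm x) :
    ∑ i ∈ Finset.range (finrank (ZMod 2) C), D ⌈/⌉ 2 ^ i ≤ Fintype.card ι := by
  induction hk : finrank (ZMod 2) C generalizing ι C D with
  | zero => simp
  | succ k ih =>
    obtain ⟨x, hxC, hx0⟩ := Submodule.exists_mem_ne_zero_of_ne_bot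
      (Submodule.one_le_finrank_iff.mp (by omega) : C ≠ ⊥)
    obtain ⟨c, ⟨hc, hc0⟩, hmin⟩ := Set.exists_min_image {x | x ∈ C ∧ x ≠ 0} hammingNorm
      (Set.toFinite _) ⟨x, hxC, hx0⟩
    obtain ⟨C', hC'dim, hC'wt⟩ := exists_residual_code C hc hc0 fun y hy hy0 => hmin y ⟨hy, hy0⟩
    have hDc : D ≤ hammingNorm c := hD c hc hc0
    have hres := ih C' (D := D ⌈/⌉ 2) (fun y hy hy0 =>
      (ceilDiv_le_iff_le_mul two_pos).2 (hDc.trans (hC'wt y hy hy0))) (by omega)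
    have hcard : Fintype.card {i // c i = 0} + hammingNorm c = Fintype.card ι := by
      rw [Fintype.card_subtype, hammingNorm, Finset.card_filter_add_card_filter_not,
        Finset.card_univ]
    simp only [ceilDiv_two_ceilDiv_two_pow] at hres
    rw [Finset.sum_range_succ', pow_zero, ceilDiv_one]
    omega

theorem not_exists_submodule_of_card_lt_griesmer {k D : ℕ}
    (h : Fintype.card ι < ∑ i ∈ Finset.range k, D ⌈/⌉ 2 ^ i) :
    ¬ ∃ C : Submodule (ZMod 2) (ι → ZMod 2),
      Nat.card C = 2 ^ k ∧ ∀ x ∈ C, x ≠ 0 → D ≤ hammingNorm x := by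
  rintro ⟨C, hC, hD⟩
  rw [Module.natCard_eq_pow_finrank (K := ZMod 2), Nat.card_zmod] at hC
  have := griesmer_bound C hD
  rw [Nat.pow_right_injective le_rfl hC] at this
  omega

end Griesmer

section DotWeight

variable {m : ℕ}

lemma dotp_eq_dotProduct (x y : Fin m → ZMod 2) : dotp x y = x ⬝ᵥ y := rfl

lemma dotp_add_left (s t α : Fin m → ZMod 2) : dotp (s + t) α = dotp s α + dotp t α :=
  add_dotProduct s t α

/-- The number of `t ∈ S` with `t · α = 1`. -/
def dotWeight (S : Finset (Fin m → ZMod 2)) (α : Fin m → ZMod 2) : ℕ := ∑ t ∈ S, (dotp t α).val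

lemma dotWeight_ne_zero {S : Finset (Fin m → ZMod 2)} {α t : Fin m → ZMod 2} (ht : t ∈ S)
    (h : dotp t α ≠ 0) : dotWeight S α ≠ 0 := by
  rw [dotWeight, Ne, Finset.sum_eq_zero_iff]
  exact fun hall => h ((ZMod.val_eq_zero _).mp (hall t ht))

/-- On a set closed under addition, `t ↦ t · α` is either identically zero or balanced: translating
by some `u ∈ S` with `u · α = 1` swaps its two fibres. -/
lemma dotWeight_eq_zero_or_two_mul_eq_card {S : Finset (Fin m → ZMod 2)}
    (hS : ∀ s ∈ S, ∀ t ∈ S, s + t ∈ S) (α : Fin m → ZMod 2) :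
    dotWeight S α = 0 ∨ 2 * dotWeight S α = #S := by
  by_cases h : ∃ u ∈ S, dotp u α ≠ 0
  · right
    obtain ⟨u, huS, hu⟩ := h
    have hu1 : dotp u α = 1 := by revert hu; generalize dotp u α = a; revert a; decide
    have hshift : dotWeight S α = ∑ t ∈ S, (dotp t α + 1).val := by
      refine Finset.sum_nbij' (· + u) (· + u) (fun t ht => hS t ht u huS)
        (fun t ht => hS t ht u huS) (fun t _ => ?_) (fun t _ => ?_) (fun t _ => ?_)
      · rw [add_assoc, add_self_eq_zero_zmod_two, add_zero]
      · rw [add_assoc, add_self_eq_zero_zmod_two, add_zero]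
      · rw [dotp_add_left, hu1, add_assoc, CharTwo.add_self_eq_zero, add_zero]
    calc 2 * dotWeight S α = ∑ t ∈ S, ((dotp t α).val + (dotp t α + 1).val) := by
          rw [Finset.sum_add_distrib, ← hshift, two_mul, dotWeight]
      _ = ∑ t ∈ S, 1 :=
          Finset.sum_congr rfl fun t _ => by generalize dotp t α = a; revert a; decide
      _ = #S := by simp
  · left
    push Not at h
    exact Finset.sum_eq_zero fun t ht => by simp [h t ht]

lemma two_mul_dotWeight_univ {α : Fin m → ZMod 2} (hα : α ≠ 0) :
    2 * dotWeight univ α = 2 ^ m := by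
  obtain ⟨i, hi⟩ := Function.ne_iff.mp hα
  have hne : dotWeight univ α ≠ 0 :=
    dotWeight_ne_zero (mem_univ (Pi.single i 1)) (by simpa [dotp_eq_dotProduct] using hi)
  simpa [hne] using dotWeight_eq_zero_or_two_mul_eq_card (fun s _ t _ => mem_univ (s + t)) α

lemma dotWeight_compl_add_dotWeight (S : Finset (Fin m → ZMod 2)) (α : Fin m → ZMod 2) :
    dotWeight Sᶜ α + dotWeight S α = dotWeight univ α :=
  Finset.sum_compl_add_sum S _

end DotWeight

section SimplicialComplex

variable {m : ℕ}

lemma mem_deltaC {M : Finset (Fin m)} {t : Fin m → ZMod 2} :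
    t ∈ deltaC M ↔ ∀ i, t i ≠ 0 → i ∈ M := by
  simp [deltaC]

lemma add_mem_deltaC {M : Finset (Fin m)} {s t : Fin m → ZMod 2} (hs : s ∈ deltaC M)
    (ht : t ∈ deltaC M) : s + t ∈ deltaC M := by
  rw [mem_deltaC] at *
  intro i hi
  by_contra hiM
  exact hi (by simp [not_imp_comm.mp (hs i) hiM, not_imp_comm.mp (ht i) hiM])

lemma single_mem_deltaC {M : Finset (Fin m)} {i : Fin m} (hi : i ∈ M) :
    Pi.single i 1 ∈ deltaC M := by
  rw [mem_deltaC]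
  intro j hj
  by_contra hjM
  exact hj (Pi.single_eq_of_ne (fun h : j = i => hjM (h ▸ hi)) 1)

lemma deltaC_eq_piFinset (M : Finset (Fin m)) :
    deltaC M = Fintype.piFinset fun i => if i ∈ M then univ else {0} := by
  ext t
  simp only [mem_deltaC, Fintype.mem_piFinset]
  refine forall_congr' fun i => ?_
  split_ifs with hi <;> simp [hi]

lemma card_deltaC (M : Finset (Fin m)) : #(deltaC M) = 2 ^ #M := by
  rw [deltaC_eq_piFinset, Fintype.card_piFinset]
  simp only [apply_ite Finset.card, card_univ, ZMod.card, card_singleton, Finset.prod_ite,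
    prod_const_one, mul_one, prod_const, Finset.filter_univ_mem]

lemma card_deltaC_product_compl (M N : Finset (Fin m)) :
    #(deltaC M ×ˢ (deltaC N)ᶜ) = 2 ^ #M * (2 ^ m - 2 ^ #N) := by
  rw [card_product, card_compl, card_deltaC, card_deltaC]
  simp

lemma dotWeight_deltaC_eq_zero_or (M : Finset (Fin m)) (α : Fin m → ZMod 2) :
    dotWeight (deltaC M) α = 0 ∨ 2 * dotWeight (deltaC M) α = 2 ^ #M := by
  rw [← card_deltaC]
  exact dotWeight_eq_zero_or_two_mul_eq_card (fun s hs t ht => add_mem_deltaC hs ht) α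

end SimplicialComplex

section GrayImage

variable {m : ℕ} (Ds : Finset ((Fin m → ZMod 2) × (Fin m → ZMod 2)))

lemma gcwR_add (v w : (Fin m → ZMod 2) × (Fin m → ZMod 2)) :
    gcwR Ds (v + w) = gcwR Ds v + gcwR Ds w := by
  funext ⟨d, i⟩
  fin_cases i
  · simp [gcwR, grayPair, cwR, dotp_eq_dotProduct, dotProduct_add]
  · simp [gcwR, grayPair, cwR, dotp_eq_dotProduct, dotProduct_add]
    abel

lemma gcwR_eq_gcwR_fst (v : (Fin m → ZMod 2) × (Fin m → ZMod 2)) :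
    gcwR Ds v = gcwR Ds (v.1, 0) := rfl

lemma gcwR_zero_left (β : Fin m → ZMod 2) : gcwR Ds (0, β) = 0 := by
  funext ⟨d, i⟩
  fin_cases i <;> simp [gcwR, grayPair, cwR, dotp_eq_dotProduct]

lemma hammingNorm_gcwR (v : (Fin m → ZMod 2) × (Fin m → ZMod 2)) :
    hammingNorm (gcwR Ds v)
      = ∑ d ∈ Ds, ((dotp d.2 v.1).val + (dotp d.1 v.1 + dotp d.2 v.1).val) := by
  rw [hammingNorm_eq_sum_val, Fintype.sum_prod_type, ← Finset.sum_coe_sort Ds]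
  simp [Fin.sum_univ_two, gcwR, grayPair, cwR]

lemma hammingNorm_gcwR_product (A B : Finset (Fin m → ZMod 2))
    (v : (Fin m → ZMod 2) × (Fin m → ZMod 2)) :
    (hammingNorm (gcwR (A ×ˢ B) v) : ℤ)
      = 2 * #A * dotWeight B v.1 + dotWeight A v.1 * (#B - 2 * dotWeight B v.1) := by
  have pointwise (a b : ZMod 2) :
      ((b.val : ℕ) : ℤ) + ((a + b).val : ℕ) = 2 * b.val + a.val - 2 * a.val * b.val := by
    revert a b; decide
  rw [hammingNorm_gcwR, Finset.sum_product, dotWeight, dotWeight]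
  simp only [Nat.cast_sum, Nat.cast_add, pointwise]
  simp only [Finset.sum_sub_distrib, Finset.sum_add_distrib, ← Finset.mul_sum, ← Finset.sum_mul,
    Finset.sum_const, nsmul_eq_mul]
  ring

lemma fst_ne_zero_of_gcwR_ne_zero {v : (Fin m → ZMod 2) × (Fin m → ZMod 2)} (hv : gcwR Ds v ≠ 0) :
    v.1 ≠ 0 :=
  fun h => hv (by rw [gcwR_eq_gcwR_fst, h, gcwR_zero_left])

lemma card_image_gcwR (h : ∀ α : Fin m → ZMod 2, α ≠ 0 → gcwR Ds (α, 0) ≠ 0) :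
    (univ.image (gcwR Ds)).card = 2 ^ m := by
  have himage : univ.image (gcwR Ds) = univ.image fun α => gcwR Ds (α, 0) := by
    ext y
    simp only [mem_image, mem_univ, true_and]
    exact ⟨fun ⟨v, hv⟩ => ⟨v.1, hv⟩, fun ⟨α, hα⟩ => ⟨(α, 0), hα⟩⟩
  have hinj : Function.Injective fun α => gcwR Ds (α, 0) := fun α β hαβ => by
    by_contra hne
    refine h (α + β) (fun h0 => hne (eq_of_add_eq_zero_zmod_two h0)) ?_
    rw [show ((α + β, 0) : (Fin m → ZMod 2) × (Fin m → ZMod 2)) = (α, 0) + (β, 0) by simp,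
      gcwR_add]
    exact (congrArg (· + gcwR Ds (β, 0)) hαβ).trans (add_self_eq_zero_zmod_two _)
  rw [himage, card_image_of_injective _ hinj, card_univ]
  simp

end GrayImage

section Weights

variable {m : ℕ} {M N : Finset (Fin m)} {α : Fin m → ZMod 2}

lemma two_pow_card_le (N : Finset (Fin m)) : 2 ^ #N ≤ 2 ^ m :=
  Nat.pow_le_pow_right two_pos (N.card_le_univ.trans_eq (Fintype.card_fin m))

lemma hammingNorm_gcwR_deltaC (hα : α ≠ 0) (β : Fin m → ZMod 2) :
    (hammingNorm (gcwR (deltaC M ×ˢ (deltaC N)ᶜ) (α, β)) : ℤ)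
      = 2 ^ #M * (2 ^ m - 2 * dotWeight (deltaC N) α)
        + dotWeight (deltaC M) α * (2 * dotWeight (deltaC N) α - 2 ^ #N) := by
  have hU := two_mul_dotWeight_univ hα
  have hQR := dotWeight_compl_add_dotWeight (deltaC N) α
  zify at hU hQR
  have hB : (#(deltaC N)ᶜ : ℤ) = 2 ^ m - 2 ^ #N := by
    rw [card_compl, Nat.cast_sub (card_le_univ _), card_deltaC]
    simp
  rw [hammingNorm_gcwR_product, card_deltaC, hB]
  push_cast
  linear_combination ((2 : ℤ) ^ #M - dotWeight (deltaC M) α) * (2 * hQR + hU)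

lemma hammingNorm_gcwR_deltaC_of_two_mul_eq (hα : α ≠ 0) (β : Fin m → ZMod 2)
    (h : 2 * dotWeight (deltaC N) α = 2 ^ #N) :
    hammingNorm (gcwR (deltaC M ×ˢ (deltaC N)ᶜ) (α, β)) = 2 ^ #M * (2 ^ m - 2 ^ #N) := by
  have hwt := hammingNorm_gcwR_deltaC (M := M) (N := N) hα β
  zify at h
  zify [two_pow_card_le N]
  rw [hwt, h]
  ring

lemma hammingNorm_gcwR_deltaC_of_eq_zero (hα : α ≠ 0) (β : Fin m → ZMod 2) (hN : N.Nonempty)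
    (h : dotWeight (deltaC N) α = 0) :
    hammingNorm (gcwR (deltaC M ×ˢ (deltaC N)ᶜ) (α, β)) = 2 ^ (m + #M) ∨
      hammingNorm (gcwR (deltaC M ×ˢ (deltaC N)ᶜ) (α, β)) = 2 ^ #M * (2 ^ m - 2 ^ (#N - 1)) := by
  have hwt := hammingNorm_gcwR_deltaC (M := M) (N := N) hα β
  have hpow : (2 : ℤ) ^ #N = 2 * 2 ^ (#N - 1) := by
    rw [← pow_succ', Nat.sub_add_cancel hN.card_pos]
  rw [h, Nat.cast_zero, mul_zero, sub_zero, zero_sub] at hwt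
  rcases dotWeight_deltaC_eq_zero_or M α with hP | hP
  · left
    zify
    rw [hwt, hP, pow_add]
    ring
  · right
    zify at hP
    zify [(Nat.pow_le_pow_right two_pos (Nat.sub_le _ 1)).trans (two_pow_card_le N)]
    rw [hwt, hpow]
    linear_combination (-(2 : ℤ) ^ (#N - 1)) * hP

theorem hammingNorm_gcwR_deltaC_trichotomy (hα : α ≠ 0) (β : Fin m → ZMod 2) (hN : N.Nonempty) :
    hammingNorm (gcwR (deltaC M ×ˢ (deltaC N)ᶜ) (α, β)) = 2 ^ (m + #M) ∨
      hammingNorm (gcwR (deltaC M ×ˢ (deltaC N)ᶜ) (α, β)) = 2 ^ #M * (2 ^ m - 2 ^ (#N - 1)) ∨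
      hammingNorm (gcwR (deltaC M ×ˢ (deltaC N)ᶜ) (α, β)) = 2 ^ #M * (2 ^ m - 2 ^ #N) := by
  rcases dotWeight_deltaC_eq_zero_or N α with hR | hR
  · rcases hammingNorm_gcwR_deltaC_of_eq_zero hα β hN hR with h | h
    · exact Or.inl h
    · exact Or.inr (Or.inl h)
  · exact Or.inr (Or.inr (hammingNorm_gcwR_deltaC_of_two_mul_eq hα β hR))

theorem hammingNorm_gcwR_deltaC_of_mem {i : Fin m} (hi : i ∈ N) (hαi : α i ≠ 0)
    (β : Fin m → ZMod 2) :
    hammingNorm (gcwR (deltaC M ×ˢ (deltaC N)ᶜ) (α, β)) = 2 ^ #M * (2 ^ m - 2 ^ #N) := by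
  have hα : α ≠ 0 := fun h => hαi (by simp [h])
  have hR : dotWeight (deltaC N) α ≠ 0 :=
    dotWeight_ne_zero (single_mem_deltaC hi) (by simpa [dotp_eq_dotProduct] using hαi)
  exact hammingNorm_gcwR_deltaC_of_two_mul_eq hα β
    ((dotWeight_deltaC_eq_zero_or N α).resolve_left hR)

end Weights

section Arithmetic

lemma le_and_le_of_three_weights {k ℓ m w : ℕ}
    (h : w = 2 ^ (m + k) ∨ w = 2 ^ k * (2 ^ m - 2 ^ (ℓ - 1)) ∨ w = 2 ^ k * (2 ^ m - 2 ^ ℓ)) :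
    2 ^ k * (2 ^ m - 2 ^ ℓ) ≤ w ∧ w ≤ 2 ^ (m + k) := by
  have hle (x : ℕ) : 2 ^ k * (2 ^ m - x) ≤ 2 ^ (m + k) := by
    rw [pow_add, mul_comm (2 ^ m)]; exact Nat.mul_le_mul_left _ (Nat.sub_le _ _)
  rcases h with rfl | rfl | rfl
  · exact ⟨hle _, le_rfl⟩
  · exact ⟨Nat.mul_le_mul_left _ (Nat.sub_le_sub_left (Nat.pow_le_pow_right two_pos
      (Nat.sub_le ℓ 1)) _), hle _⟩
  · exact ⟨le_rfl, hle _⟩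

lemma two_pow_add_lt_two_mul {k ℓ m : ℕ} (h : ℓ + 2 ≤ m) :
    2 ^ (m + k) < 2 * (2 ^ k * (2 ^ m - 2 ^ ℓ)) := by
  rw [Nat.mul_sub, ← pow_add, ← pow_add]
  have h1 : 2 ^ (k + ℓ) * 4 ≤ 2 ^ (k + m) := by
    rw [show (4 : ℕ) = 2 ^ 2 by rfl, ← pow_add]; exact Nat.pow_le_pow_right two_pos (by omega)
  have h2 : 0 < 2 ^ (k + ℓ) := by positivity
  rw [add_comm m k]
  omega

lemma lt_ceilDiv_two_pow {a s i : ℕ} (hi : i ≤ a) :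
    2 ^ (a - i) - 2 ^ (s - i) < (2 ^ a - 2 ^ s + 1) ⌈/⌉ 2 ^ i := by
  rw [← not_le, ceilDiv_le_iff_le_mul (by positivity), Nat.mul_sub, ← pow_add, ← pow_add,
    Nat.add_sub_cancel' hi]
  have : 2 ^ s ≤ 2 ^ (i + (s - i)) := Nat.pow_le_pow_right two_pos (by omega)
  omega

-- For `i > s` the exponent `s - i` truncates to `0`, which produces the term `n - (s + 1)`.
lemma sum_range_two_pow_sub_add (s n : ℕ) :
    ∑ i ∈ Finset.range n, 2 ^ (s - i) + 2 ^ (s + 1 - n) = 2 ^ (s + 1) + (n - (s + 1)) := by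
  induction n with
  | zero => simp
  | succ n ih =>
    rw [Finset.sum_range_succ]
    rcases le_or_gt n s with h | h
    · have : 2 ^ (s + 1 - n) = 2 * 2 ^ (s - n) := by rw [← pow_succ']; congr 1; omega
      rw [show s + 1 - (n + 1) = s - n by omega]
      omega
    · rw [show s - n = 0 by omega, show s + 1 - (n + 1) = 0 by omega]
      rw [show s + 1 - n = 0 by omega] at ih
      omega

/-- Termwise `(d + 1) ⌈/⌉ 2^i ≥ 2^(k+m-i) - 2^(k+ℓ-i) + 1` for `d = 2^(k+m) - 2^(k+ℓ)`. -/
lemma two_mul_lt_sum_ceilDiv {k ℓ m : ℕ} (hℓm : ℓ ≤ m)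
    (h : 2 ^ (k + 1) + (m - (k + ℓ + 1)) < m + 2 ^ (k + ℓ + 1 - m)) :
    2 * (2 ^ k * (2 ^ m - 2 ^ ℓ))
      < ∑ i ∈ Finset.range m, (2 ^ k * (2 ^ m - 2 ^ ℓ) + 1) ⌈/⌉ 2 ^ i := by
  rw [Nat.mul_sub, ← pow_add, ← pow_add]
  have hterm : ∀ i ∈ Finset.range m, 2 ^ (k + m - i) + 1
      ≤ (2 ^ (k + m) - 2 ^ (k + ℓ) + 1) ⌈/⌉ 2 ^ i + 2 ^ (k + ℓ - i) := fun i hi => by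
    have := lt_ceilDiv_two_pow (s := k + ℓ) (show i ≤ k + m by have := Finset.mem_range.mp hi; omega)
    omega
  have hsum := Finset.sum_le_sum hterm
  rw [Finset.sum_add_distrib, Finset.sum_add_distrib, Finset.sum_const, Finset.card_range,
    smul_eq_mul, mul_one] at hsum
  have hA := sum_range_two_pow_sub_add (k + m) m
  have hB := sum_range_two_pow_sub_add (k + ℓ) m
  rw [show k + m + 1 - m = k + 1 by omega, show m - (k + m + 1) = 0 by omega] at hA
  rw [pow_succ] at hA hB
  have : 2 ^ (k + ℓ) ≤ 2 ^ (k + m) := Nat.pow_le_pow_right two_pos (by omega)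
  omega

lemma two_mul_lt_sum_ceilDiv_of_add_lt {k ℓ m : ℕ} (hkℓ : k + ℓ + 1 ≤ m)
    (h : 2 ^ (k + 1) - 1 < k + ℓ + 1) :
    2 * (2 ^ k * (2 ^ m - 2 ^ ℓ))
      < ∑ i ∈ Finset.range m, (2 ^ k * (2 ^ m - 2 ^ ℓ) + 1) ⌈/⌉ 2 ^ i := by
  refine two_mul_lt_sum_ceilDiv (by omega) ?_
  rw [show k + ℓ + 1 - m = 0 by omega, pow_zero]
  omega

lemma two_mul_lt_sum_ceilDiv_of_le_add {k ℓ m : ℕ} (hℓm : ℓ ≤ m) (hkℓ : m ≤ k + ℓ)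
    (h : 2 ^ (k + ℓ + 1 - m) * (2 ^ (m - ℓ) - 1) < m) :
    2 * (2 ^ k * (2 ^ m - 2 ^ ℓ))
      < ∑ i ∈ Finset.range m, (2 ^ k * (2 ^ m - 2 ^ ℓ) + 1) ⌈/⌉ 2 ^ i := by
  refine two_mul_lt_sum_ceilDiv hℓm ?_
  rw [Nat.mul_sub_one, ← pow_add, show k + ℓ + 1 - m + (m - ℓ) = k + 1 by omega] at h
  omega

end Arithmetic

theorem stmt_17_general {m : ℕ} (M N : Finset (Fin m))
    (hN : N ≠ ∅) (hNu : N ≠ Finset.univ)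
    (Ds : Finset ((Fin m → ZMod 2) × (Fin m → ZMod 2)))
    (hDs : Ds = deltaC M ×ˢ (deltaC N)ᶜ) :
    (2 * Ds.card = 2 ^ (M.card + 1) * (2 ^ m - 2 ^ N.card)) ∧
    ((Finset.univ : Finset ((Fin m → ZMod 2) × (Fin m → ZMod 2))).image (gcwR Ds)).card = 2 ^ m ∧
    (∀ v w : (Fin m → ZMod 2) × (Fin m → ZMod 2), ∃ z : (Fin m → ZMod 2) × (Fin m → ZMod 2), gcwR Ds z = gcwR Ds v + gcwR Ds w) ∧
    (∀ v : (Fin m → ZMod 2) × (Fin m → ZMod 2), gcwR Ds v ≠ 0 → 2 ^ M.card * (2 ^ m - 2 ^ N.card) ≤ hammingNorm (gcwR Ds v)) ∧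
    (∃ v : (Fin m → ZMod 2) × (Fin m → ZMod 2), gcwR Ds v ≠ 0 ∧ hammingNorm (gcwR Ds v) = 2 ^ M.card * (2 ^ m - 2 ^ N.card)) ∧
    (∀ v : (Fin m → ZMod 2) × (Fin m → ZMod 2), gcwR Ds v ≠ 0 →
        hammingNorm (gcwR Ds v) = 2 ^ (m + M.card) ∨
        hammingNorm (gcwR Ds v) = 2 ^ M.card * (2 ^ m - 2 ^ (N.card - 1)) ∨
        hammingNorm (gcwR Ds v) = 2 ^ M.card * (2 ^ m - 2 ^ N.card)) ∧
    (N.card ≤ m - 2 →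
      ∀ v w : (Fin m → ZMod 2) × (Fin m → ZMod 2), gcwR Ds v ≠ 0 → gcwR Ds w ≠ 0 →
      (∀ i, gcwR Ds w i ≠ 0 → gcwR Ds v i ≠ 0) → gcwR Ds w = gcwR Ds v) ∧
    (M.card + N.card ≤ m - 1 → 2 ^ (M.card + 1) - 1 < M.card + N.card + 1 →
      ¬ ∃ C : Submodule (ZMod 2) (({d // d ∈ Ds} × Fin 2) → ZMod 2),
          Nat.card C = 2 ^ m ∧ ∀ x ∈ C, x ≠ 0 → 2 ^ M.card * (2 ^ m - 2 ^ N.card) + 1 ≤ hammingNorm x) ∧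
    (m ≤ M.card + N.card → M.card + N.card ≤ 2 * m - 1 → 0 < 2 ^ (M.card + N.card + 1 - m) * (2 ^ (m - N.card) - 1) → 2 ^ (M.card + N.card + 1 - m) * (2 ^ (m - N.card) - 1) < m →
      ¬ ∃ C : Submodule (ZMod 2) (({d // d ∈ Ds} × Fin 2) → ZMod 2),
          Nat.card C = 2 ^ m ∧ ∀ x ∈ C, x ≠ 0 → 2 ^ M.card * (2 ^ m - 2 ^ N.card) + 1 ≤ hammingNorm x) := by
  subst hDs
  have hNne : N.Nonempty := nonempty_iff_ne_empty.mpr hN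
  have hNm : #N < m := by simpa using card_lt_card (ssubset_univ_iff.mpr hNu)
  have hd : 0 < 2 ^ #M * (2 ^ m - 2 ^ #N) :=
    Nat.mul_pos (by positivity) (Nat.sub_pos_of_lt (Nat.pow_lt_pow_right one_lt_two hNm))
  have hbounds (v : (Fin m → ZMod 2) × (Fin m → ZMod 2)) (hα : v.1 ≠ 0) :=
    le_and_le_of_three_weights (hammingNorm_gcwR_deltaC_trichotomy (M := M) hα v.2 hNne)
  have hlength : Fintype.card ({d // d ∈ deltaC M ×ˢ (deltaC N)ᶜ} × Fin 2)
      = 2 * (2 ^ #M * (2 ^ m - 2 ^ #N)) := by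
    rw [Fintype.card_prod, Fintype.card_coe, Fintype.card_fin, card_deltaC_product_compl, mul_comm]
  refine ⟨by rw [card_deltaC_product_compl, pow_succ]; ring,
    card_image_gcwR _ fun α hα h0 => ?_, fun v w => ⟨v + w, gcwR_add _ v w⟩,
    fun v hv => (hbounds v (fst_ne_zero_of_gcwR_ne_zero _ hv)).1, ?_,
    fun v hv => hammingNorm_gcwR_deltaC_trichotomy (fst_ne_zero_of_gcwR_ne_zero _ hv) v.2 hNne,
    fun hNm2 v w hv hw hsub => ?_, fun hkℓ hk => ?_, fun hkℓ _ _ hk => ?_⟩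
  · have := (hbounds (α, 0) hα).1
    rw [h0, hammingNorm_zero] at this
    omega
  · obtain ⟨i, hi⟩ := hNne
    have hw := hammingNorm_gcwR_deltaC_of_mem (M := M) hi (α := Pi.single i 1) (by simp) 0
    refine ⟨(Pi.single i 1, 0), fun h0 => ?_, hw⟩
    rw [h0, hammingNorm_zero] at hw
    exact hd.ne hw
  · have hNm2' : #N + 2 ≤ m := by have := hNne.card_pos; omega
    refine eq_of_support_subset_of_lt_two_mul (two_pow_add_lt_two_mul hNm2')
      (hbounds v (fst_ne_zero_of_gcwR_ne_zero _ hv)).2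
      (hbounds w (fst_ne_zero_of_gcwR_ne_zero _ hw)).1 (fun h => ?_) hsub
    rw [← gcwR_add] at h ⊢
    exact (hbounds _ (fst_ne_zero_of_gcwR_ne_zero _ h)).1
  · refine not_exists_submodule_of_card_lt_griesmer ?_
    rw [hlength]
    exact two_mul_lt_sum_ceilDiv_of_add_lt (by omega) hk
  · refine not_exists_submodule_of_card_lt_griesmer ?_
    rw [hlength]
    exact two_mul_lt_sum_ceilDiv_of_le_add hNm.le hkℓ hk

theorem stmt_17 {m : ℕ} (hm : 1 ≤ m) (M N : Finset (Fin m))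
    (hN : N ≠ ∅) (hNu : N ≠ Finset.univ)
    (Ds : Finset ((Fin m → ZMod 2) × (Fin m → ZMod 2)))
    (hDs : Ds = deltaC M ×ˢ (deltaC N)ᶜ) :
    (2 * Ds.card = 2 ^ (M.card + 1) * (2 ^ m - 2 ^ N.card)) ∧
    ((Finset.univ : Finset ((Fin m → ZMod 2) × (Fin m → ZMod 2))).image (gcwR Ds)).card = 2 ^ m ∧
    (∀ v w : (Fin m → ZMod 2) × (Fin m → ZMod 2), ∃ z : (Fin m → ZMod 2) × (Fin m → ZMod 2), gcwR Ds z = gcwR Ds v + gcwR Ds w) ∧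
    (∀ v : (Fin m → ZMod 2) × (Fin m → ZMod 2), gcwR Ds v ≠ 0 → 2 ^ M.card * (2 ^ m - 2 ^ N.card) ≤ hammingNorm (gcwR Ds v)) ∧
    (∃ v : (Fin m → ZMod 2) × (Fin m → ZMod 2), gcwR Ds v ≠ 0 ∧ hammingNorm (gcwR Ds v) = 2 ^ M.card * (2 ^ m - 2 ^ N.card)) ∧
    (∀ v : (Fin m → ZMod 2) × (Fin m → ZMod 2), gcwR Ds v ≠ 0 →
        hammingNorm (gcwR Ds v) = 2 ^ (m + M.card) ∨
        hammingNorm (gcwR Ds v) = 2 ^ M.card * (2 ^ m - 2 ^ (N.card - 1)) ∨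
        hammingNorm (gcwR Ds v) = 2 ^ M.card * (2 ^ m - 2 ^ N.card)) ∧
    (N.card ≤ m - 2 →
      ∀ v w : (Fin m → ZMod 2) × (Fin m → ZMod 2), gcwR Ds v ≠ 0 → gcwR Ds w ≠ 0 →
      (∀ i, gcwR Ds w i ≠ 0 → gcwR Ds v i ≠ 0) → gcwR Ds w = gcwR Ds v) ∧
    (M.card + N.card ≤ m - 1 → 2 ^ (M.card + 1) - 1 < M.card + N.card + 1 →
      ¬ ∃ C : Submodule (ZMod 2) (({d // d ∈ Ds} × Fin 2) → ZMod 2),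
          Nat.card C = 2 ^ m ∧ ∀ x ∈ C, x ≠ 0 → 2 ^ M.card * (2 ^ m - 2 ^ N.card) + 1 ≤ hammingNorm x) ∧
    (m ≤ M.card + N.card → M.card + N.card ≤ 2 * m - 1 → 0 < 2 ^ (M.card + N.card + 1 - m) * (2 ^ (m - N.card) - 1) → 2 ^ (M.card + N.card + 1 - m) * (2 ^ (m - N.card) - 1) < m →
      ¬ ∃ C : Submodule (ZMod 2) (({d // d ∈ Ds} × Fin 2) → ZMod 2),
          Nat.card C = 2 ^ m ∧ ∀ x ∈ C, x ≠ 0 → 2 ^ M.card * (2 ^ m - 2 ^ N.card) + 1 ≤ hammingNorm x) :=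
  stmt_17_general M N hN hNu Ds hDs
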